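/- Let m, n be positive integers, G = Z_m × Z_n, and let 0 ≤ a < m, 0 ≤ b < gcd(m,n), 0 ≤ d < n be integers. If there exists a quasi-bicharacter R: G×G → k^* with respect to Φ_{a,b,d}, then m divides 2a and n divides 2d; that is, either a = 0, or m is even and a = m/2, and likewise either d = 0, or n is even and d = n/2. -/

import Mathlib

/-- The 3-cocycle
`Φ_{a,b,d}(g₁^i g₂^j, g₁^s g₂^t, g₁^k g₂^l) = ζ_m^{a·i·[(s+k)/m]} · ζ_n^{b·j·[(s+k)/m]} · ζ_n^{d·j·[(t+l)/n]}`
on `Z_m × Z_n` (written additively), with values in `kˣ`. -/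
noncomputable def PhiABD {k : Type*} [Field k] (m n : ℕ) (ζm ζn : kˣ) (a b d : ℕ)
    (x y z : ZMod m × ZMod n) : kˣ :=
  ζm ^ (a * x.1.val * ((y.1.val + z.1.val) / m)) *
    ζn ^ (b * x.2.val * ((y.1.val + z.1.val) / m)) *
    ζn ^ (d * x.2.val * ((y.2.val + z.2.val) / n))

/-- `R : G × G → kˣ` is a quasi-bicharacter with respect to a (normalized 3-cocycle)
`Φ` if `R(xy,z) = R(x,z)·R(y,z)·Φ(z,x,y)·Φ(x,y,z)·Φ(x,z,y)⁻¹` and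
`R(x,yz) = R(x,y)·R(x,z)·Φ(y,x,z)·Φ(y,z,x)⁻¹·Φ(x,y,z)⁻¹` for all `x, y, z ∈ G`. -/
def IsQuasiBicharacter {G : Type*} [AddCommGroup G] {k : Type*} [Field k]
    (Φ : G → G → G → kˣ) (R : G → G → kˣ) : Prop :=
  (∀ x y z : G,
      R (x + y) z = R x z * R y z * (Φ z x y * Φ x y z * (Φ x z y)⁻¹)) ∧
  (∀ x y z : G,
      R x (y + z) = R x y * R x z * (Φ y x z * (Φ y z x)⁻¹ * (Φ x y z)⁻¹))

/-!
`Φ_{a,b,d}(x, y, z)` is symmetric in `y, z`, so a quasi-bicharacter satisfies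
`R(x+y, z) = R(x,z) R(y,z) Φ(z,x,y)` and `R(x, y+z) = R(x,y) R(x,z) Φ(x,y,z)⁻¹`.
Running both rules around the cycle generated by `g` of order `m` gives
`1 = R(g,g)^m P` and `1 = R(g,g)^m P⁻¹` with `P = ∏_{i<m} Φ(g, i g, g)`, hence `P² = 1`.
For `g = g₁` only the carry at `i = m - 1` contributes, so `P = ζ_m^a` and `m ∣ 2a`;
likewise `g = g₂` gives `n ∣ 2d`.
-/

namespace IsQuasiBicharacter

variable {G : Type*} [AddCommGroup G] {k : Type*} [Field k]
  {Φ : G → G → G → kˣ} {R : G → G → kˣ}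

theorem map_add_left (hR : IsQuasiBicharacter Φ R) (hΦ : ∀ x y z, Φ x y z = Φ x z y)
    (x y z : G) : R (x + y) z = R x z * R y z * Φ z x y := by
  rw [hR.1, hΦ x y z, mul_inv_cancel_right]

theorem map_add_right (hR : IsQuasiBicharacter Φ R) (hΦ : ∀ x y z, Φ x y z = Φ x z y)
    (x y z : G) : R x (y + z) = R x y * R x z * (Φ x y z)⁻¹ := by
  rw [hR.2, hΦ y x z, mul_inv_cancel, one_mul]

theorem map_zero_left (hR : IsQuasiBicharacter Φ R) (hΦ : ∀ x y z, Φ x y z = Φ x z y)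
    {z : G} (hz : Φ z 0 0 = 1) : R 0 z = 1 := by
  have h := hR.map_add_left hΦ 0 0 z
  rwa [add_zero, hz, mul_one, right_eq_mul] at h

theorem map_zero_right (hR : IsQuasiBicharacter Φ R) (hΦ : ∀ x y z, Φ x y z = Φ x z y)
    {x : G} (hx : Φ x 0 0 = 1) : R x 0 = 1 := by
  have h := hR.map_add_right hΦ x 0 0
  rwa [add_zero, hx, inv_one, mul_one, right_eq_mul] at h

theorem map_nsmul_left (hR : IsQuasiBicharacter Φ R) (hΦ : ∀ x y z, Φ x y z = Φ x z y)
    {g : G} (hg : Φ g 0 0 = 1) (j : ℕ) :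
    R (j • g) g = R g g ^ j * ∏ i ∈ Finset.range j, Φ g (i • g) g := by
  induction j with
  | zero => simpa using hR.map_zero_left hΦ hg
  | succ j ih =>
    rw [succ_nsmul, hR.map_add_left hΦ, ih, Finset.prod_range_succ, pow_succ]
    ac_rfl

theorem map_nsmul_right (hR : IsQuasiBicharacter Φ R) (hΦ : ∀ x y z, Φ x y z = Φ x z y)
    {g : G} (hg : Φ g 0 0 = 1) (j : ℕ) :
    R g (j • g) = R g g ^ j * (∏ i ∈ Finset.range j, Φ g (i • g) g)⁻¹ := by
  induction j with
  | zero => simpa using hR.map_zero_right hΦ hg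
  | succ j ih =>
    rw [succ_nsmul, hR.map_add_right hΦ, ih, Finset.prod_range_succ, pow_succ,
      mul_inv]
    ac_rfl

theorem prod_cocycle_sq_eq_one (hR : IsQuasiBicharacter Φ R)
    (hΦ : ∀ x y z, Φ x y z = Φ x z y) {g : G} (hg : Φ g 0 0 = 1) {m : ℕ} (hm : m • g = 0) :
    (∏ i ∈ Finset.range m, Φ g (i • g) g) ^ 2 = 1 := by
  have hleft := hR.map_nsmul_left hΦ hg m
  have hright := hR.map_nsmul_right hΦ hg m
  rw [hm, hR.map_zero_left hΦ hg] at hleft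
  rw [hm, hR.map_zero_right hΦ hg] at hright
  calc (∏ i ∈ Finset.range m, Φ g (i • g) g) ^ 2
      = (R g g ^ m * ∏ i ∈ Finset.range m, Φ g (i • g) g) /
          (R g g ^ m * (∏ i ∈ Finset.range m, Φ g (i • g) g)⁻¹) := by
        rw [mul_div_mul_left_eq_div, div_inv_eq_mul, sq]
    _ = 1 := by rw [← hleft, ← hright, div_one]

end IsQuasiBicharacter

theorem Nat.sum_range_add_one_div_self {m : ℕ} (hm : 0 < m) :
    ∑ i ∈ Finset.range m, (i + 1) / m = 1 := by
  obtain ⟨m, rfl⟩ := Nat.exists_eq_add_one_of_ne_zero hm.ne'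
  rw [Finset.sum_range_succ, Nat.div_self hm,
    Finset.sum_eq_zero fun i hi => Nat.div_eq_of_lt (by simp at hi; omega)]

theorem Nat.eq_zero_or_eq_half_of_dvd_two_mul {m a : ℕ} (h : m ∣ 2 * a) (ha : a < m) :
    a = 0 ∨ (m % 2 = 0 ∧ a = m / 2) := by
  obtain ⟨c, hc⟩ := h
  have hc2 : c < 2 := Nat.lt_of_mul_lt_mul_left (a := m) (by omega)
  interval_cases c <;> omega

section PhiABD

variable {k : Type*} [Field k] {m n : ℕ} (ζm ζn : kˣ) (a b d : ℕ)

theorem PhiABD_comm (x y z : ZMod m × ZMod n) :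
    PhiABD m n ζm ζn a b d x y z = PhiABD m n ζm ζn a b d x z y := by
  simp only [PhiABD, add_comm y.1.val, add_comm y.2.val]

theorem PhiABD_zero_zero (x : ZMod m × ZMod n) : PhiABD m n ζm ζn a b d x 0 0 = 1 := by
  simp [PhiABD]

theorem prod_PhiABD_fst (hm : 1 < m) :
    ∏ i ∈ Finset.range m, PhiABD m n ζm ζn a b d (1, 0) (i • (1, 0)) (1, 0) = ζm ^ a := by
  have : Fact (1 < m) := ⟨hm⟩
  calc ∏ i ∈ Finset.range m, PhiABD m n ζm ζn a b d (1, 0) (i • (1, 0)) (1, 0)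
      = ∏ i ∈ Finset.range m, ζm ^ (a * ((i + 1) / m)) := by
        refine Finset.prod_congr rfl fun i hi => ?_
        simp [PhiABD, ZMod.val_one, ZMod.val_natCast, Nat.mod_eq_of_lt (Finset.mem_range.1 hi)]
    _ = ζm ^ a := by
        rw [Finset.prod_pow_eq_pow_sum, ← Finset.mul_sum,
          Nat.sum_range_add_one_div_self (by omega), mul_one]

theorem prod_PhiABD_snd (hn : 1 < n) :
    ∏ i ∈ Finset.range n, PhiABD m n ζm ζn a b d (0, 1) (i • (0, 1)) (0, 1) = ζn ^ d := by
  have : Fact (1 < n) := ⟨hn⟩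
  calc ∏ i ∈ Finset.range n, PhiABD m n ζm ζn a b d (0, 1) (i • (0, 1)) (0, 1)
      = ∏ i ∈ Finset.range n, ζn ^ (d * ((i + 1) / n)) := by
        refine Finset.prod_congr rfl fun i hi => ?_
        simp [PhiABD, ZMod.val_one, ZMod.val_natCast, Nat.mod_eq_of_lt (Finset.mem_range.1 hi)]
    _ = ζn ^ d := by
        rw [Finset.prod_pow_eq_pow_sum, ← Finset.mul_sum,
          Nat.sum_range_add_one_div_self (by omega), mul_one]

end PhiABD

theorem statement15_general (k : Type*) [Field k]
    (m n : ℕ)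
    (ζm ζn : kˣ) (hζm : IsPrimitiveRoot ζm m) (hζn : IsPrimitiveRoot ζn n)
    (a b d : ℕ) (ha : a < m) (hd : d < n)
    (R : ZMod m × ZMod n → ZMod m × ZMod n → kˣ)
    (hR : IsQuasiBicharacter (PhiABD m n ζm ζn a b d) R) :
    (m ∣ 2 * a ∧ n ∣ 2 * d) ∧
      (a = 0 ∨ (m % 2 = 0 ∧ a = m / 2)) ∧ (d = 0 ∨ (n % 2 = 0 ∧ d = n / 2)) := by
  have hma : m ∣ 2 * a := by
    rcases (by omega : m = 1 ∨ 1 < m) with rfl | hm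
    · exact one_dvd _
    refine hζm.dvd_of_pow_eq_one _ ?_
    rw [mul_comm, pow_mul, ← prod_PhiABD_fst ζm ζn a b d hm]
    exact hR.prod_cocycle_sq_eq_one (PhiABD_comm ζm ζn a b d) (PhiABD_zero_zero ζm ζn a b d _)
      (by ext <;> simp)
  have hnd : n ∣ 2 * d := by
    rcases (by omega : n = 1 ∨ 1 < n) with rfl | hn
    · exact one_dvd _
    refine hζn.dvd_of_pow_eq_one _ ?_
    rw [mul_comm, pow_mul, ← prod_PhiABD_snd ζm ζn a b d hn]
    exact hR.prod_cocycle_sq_eq_one (PhiABD_comm ζm ζn a b d) (PhiABD_zero_zero ζm ζn a b d _)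
      (by ext <;> simp)
  exact ⟨⟨hma, hnd⟩, Nat.eq_zero_or_eq_half_of_dvd_two_mul hma ha,
    Nat.eq_zero_or_eq_half_of_dvd_two_mul hnd hd⟩

/-- If there exists a quasi-bicharacter on `Z_m × Z_n` with respect to
`Φ_{a,b,d}`, then `m ∣ 2a` and `n ∣ 2d`; that is, either `a = 0`, or `m` is even and
`a = m/2`, and likewise either `d = 0`, or `n` is even and `d = n/2`. -/
theorem statement15 (k : Type*) [Field k] [IsAlgClosed k] [CharZero k]
    (m n : ℕ) (hm : 0 < m) (hn : 0 < n)
    (ζm ζn : kˣ) (hζm : IsPrimitiveRoot ζm m) (hζn : IsPrimitiveRoot ζn n)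
    (a b d : ℕ) (ha : a < m) (hb : b < Nat.gcd m n) (hd : d < n)
    (R : ZMod m × ZMod n → ZMod m × ZMod n → kˣ)
    (hR : IsQuasiBicharacter (PhiABD m n ζm ζn a b d) R) :
    (m ∣ 2 * a ∧ n ∣ 2 * d) ∧
      (a = 0 ∨ (m % 2 = 0 ∧ a = m / 2)) ∧ (d = 0 ∨ (n % 2 = 0 ∧ d = n / 2)) :=
  statement15_general k m n ζm ζn hζm hζn a b d ha hd R hR
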